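/- Let p be a non-constant polynomial in d complex variables with reflection p̃(z) = z₁^{k₁}⋯z_d^{k_d}·conj(p(1/conj(z₁),…,1/conj(z_d))). Suppose p has a zero at a point τ = (τ₁,…,τ_d) on the torus T^d (all |τᵢ| = 1). Then along the radial path r ↦ (rτ₁,…,rτ_d), the quantity |p(rτ)|^d − |p̃(rτ)|^d is O((1−r)^{d+1}) as r → 1⁻. Consequently there is no constant c > 0 with |p(z)|^d − |p̃(z)|^d ≥ c·∏_{i=1}^d(1−|z_i|²) on the polydisk; i.e., the inequality (with some c > 0) forces p to have no zeros on T^d. -/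

import Mathlib

/-! Restrict `p` to the complex line `s ↦ sτ`: since `p(τ) = 0`, this gives `p(sτ) = (s - 1) Q(s)`
for a polynomial `Q`. On the torus `1 / conj(rτᵢ) = τᵢ / r`, so on the radial path
`|p(rτ)| = (1 - r)|Q(r)|` and `|p̃(rτ)| = (1 - r) r^(K-1) |Q(1/r)|` with `K = ∑ kᵢ`. Both
cofactors are differentiable in `r` and agree at `r = 1`, so the difference of their `d`-th powers
is `O(1 - r)`, and `|p(rτ)|^d - |p̃(rτ)|^d = O((1 - r)^(d+1))`. This is `o((1 - r)^d)`, whereas the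
lower bound would force it to be at least `c (1 - r²)^d ≥ c (1 - r)^d`. -/

open Complex MvPolynomial Asymptotics Filter Topology ComplexConjugate

theorem MvPolynomial.exists_eval_mul_eq_sub_one_mul {R σ : Type*} [CommRing R]
    {p : MvPolynomial σ R} {τ : σ → R} (hτ : eval τ p = 0) :
    ∃ Q : Polynomial R, ∀ s, eval (fun i => s * τ i) p = (s - 1) * Q.eval s := by
  set P : Polynomial R := aeval (fun i => Polynomial.C (τ i) * Polynomial.X) p
  have hP : ∀ s, P.eval s = eval (fun i => s * τ i) p := fun s => by
    simp only [P, aeval_def, Polynomial.algebraMap_eq, polynomial_eval_eval₂, Polynomial.eval_mul,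
      Polynomial.eval_C, Polynomial.eval_X, mul_comm (τ _)]
    congr 1
    ext; simp
  have hroot : P.IsRoot 1 := by simpa [Polynomial.IsRoot, hP] using hτ
  refine ⟨P /ₘ (Polynomial.X - Polynomial.C 1), fun s => ?_⟩
  rw [← hP]
  conv_lhs => rw [← Polynomial.mul_divByMonic_eq_iff_isRoot.mpr hroot]
  simp

theorem isBigO_norm_pow_sub_norm_pow {𝕜 𝔸 : Type*} [NontriviallyNormedField 𝕜] [NormedField 𝔸]
    [NormedAlgebra 𝕜 𝔸] {f g : 𝕜 → 𝔸} {x₀ : 𝕜} (hf : DifferentiableAt 𝕜 f x₀)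
    (hg : DifferentiableAt 𝕜 g x₀) (hfg : f x₀ = g x₀) (n : ℕ) :
    (fun x => ‖f x‖ ^ n - ‖g x‖ ^ n) =O[𝓝 x₀] (fun x => x - x₀) := by
  have hdiff : (fun x => f x ^ n - g x ^ n) =O[𝓝 x₀] (fun x => x - x₀) := by
    simpa [hfg] using ((hf.pow n).sub (hg.pow n)).isBigO_sub
  refine IsBigO.trans (isBigO_of_le _ fun x => ?_) hdiff
  simpa only [Real.norm_eq_abs, norm_pow] using abs_norm_sub_norm_le (f x ^ n) (g x ^ n)

theorem Polynomial.isBigO_norm_eval_pow_sub_norm_eval_inv_pow (Q : Polynomial ℂ) (K n : ℕ) :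
    (fun r : ℝ => ‖Q.eval (r : ℂ)‖ ^ n - ‖(r : ℂ) ^ K * (r : ℂ)⁻¹ * Q.eval (r : ℂ)⁻¹‖ ^ n)
      =O[𝓝 1] (fun r : ℝ => r - 1) := by
  have hQ : DifferentiableAt ℂ (fun s => Q.eval s) ((1 : ℝ) : ℂ) := Q.differentiable _
  have hQinv : DifferentiableAt ℂ (fun s : ℂ => s ^ K * s⁻¹ * Q.eval s⁻¹) ((1 : ℝ) : ℂ) := by
    fun_prop (disch := simp)
  exact isBigO_norm_pow_sub_norm_pow hQ.hasDerivAt.comp_ofReal.differentiableAt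
    hQinv.hasDerivAt.comp_ofReal.differentiableAt (by simp) n

theorem not_eventually_mul_le_of_isLittleO {α : Type*} {l : Filter α} [l.NeBot] {f g : α → ℝ}
    (h : f =o[l] g) {c : ℝ} (hc : 0 < c) (hg : ∀ᶠ x in l, 0 < g x) :
    ¬ ∀ᶠ x in l, c * g x ≤ f x := by
  intro hle
  obtain ⟨x, hfx, hgx, hcx⟩ := ((h.bound (half_pos hc)).and (hg.and hle)).exists
  rw [Real.norm_eq_abs, Real.norm_eq_abs, abs_of_pos hgx] at hfx
  nlinarith [le_abs_self (f x)]

section Radial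

variable {σ : Type*} {p : MvPolynomial σ ℂ} {τ : σ → ℂ} {Q : Polynomial ℂ}

theorem norm_ofReal_mul_of_norm_eq_one {t : ℂ} (ht : ‖t‖ = 1) {r : ℝ} (hr : 0 ≤ r) :
    ‖(r : ℂ) * t‖ = r := by
  rw [norm_mul, ht, mul_one, norm_real, Real.norm_of_nonneg hr]

theorem norm_eval_radial (hQ : ∀ s, eval (fun i => s * τ i) p = (s - 1) * Q.eval s) (r : ℝ) :
    ‖eval (fun i => (r : ℂ) * τ i) p‖ = |1 - r| * ‖Q.eval (r : ℂ)‖ := by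
  rw [hQ, norm_mul, ← norm_neg, neg_sub, ← ofReal_one, ← ofReal_sub, norm_real, Real.norm_eq_abs]

theorem norm_reflection_radial [Fintype σ] (hτ : ∀ i, ‖τ i‖ = 1)
    (hQ : ∀ s, eval (fun i => s * τ i) p = (s - 1) * Q.eval s) (k : σ → ℕ) {r : ℝ} (hr : 0 < r) :
    ‖(∏ i, ((r : ℂ) * τ i) ^ k i) * conj (eval (fun i => (conj ((r : ℂ) * τ i))⁻¹) p)‖ =
      |1 - r| * ‖(r : ℂ) ^ (∑ i, k i) * (r : ℂ)⁻¹ * Q.eval (r : ℂ)⁻¹‖ := by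
  have hr' : (r : ℂ) ≠ 0 := ofReal_ne_zero.mpr hr.ne'
  have harg : (fun i => (conj ((r : ℂ) * τ i))⁻¹) = fun i => (r : ℂ)⁻¹ * τ i := by
    funext i
    rw [map_mul, conj_ofReal, ← inv_eq_conj (hτ i), mul_inv, inv_inv]
  have hprod : ‖∏ i, ((r : ℂ) * τ i) ^ k i‖ = ‖(r : ℂ) ^ (∑ i, k i)‖ := by
    simp only [norm_prod, norm_pow, norm_mul, hτ, mul_one, Finset.prod_pow_eq_pow_sum]
  rw [norm_mul, RCLike.norm_conj, hprod, ← norm_mul, harg, hQ, ← Real.norm_eq_abs, ← norm_real,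
    ofReal_sub, ofReal_one, ← norm_mul]
  congr 1
  field_simp

theorem isBigO_norm_pow_sub_norm_reflection_pow_radial [Fintype σ] {k : σ → ℕ}
    {ptilde : (σ → ℂ) → ℂ}
    (hpt : ∀ z : σ → ℂ, (∀ i, z i ≠ 0) →
      ptilde z = (∏ i, z i ^ k i) * conj (eval (fun i => (conj (z i))⁻¹) p))
    (hτ : ∀ i, ‖τ i‖ = 1) (hzero : eval τ p = 0) (n : ℕ) :
    (fun r : ℝ => ‖eval (fun i => (r : ℂ) * τ i) p‖ ^ n - ‖ptilde (fun i => (r : ℂ) * τ i)‖ ^ n)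
      =O[𝓝[<] 1] (fun r : ℝ => (1 - r) ^ (n + 1)) := by
  obtain ⟨Q, hQ⟩ := exists_eval_mul_eq_sub_one_mul hzero
  have hcancel := (isBigO_refl (fun r : ℝ => |1 - r| ^ n) (𝓝[<] 1)).mul
    ((Q.isBigO_norm_eval_pow_sub_norm_eval_inv_pow (∑ i, k i) n).mono nhdsWithin_le_nhds)
  refine (hcancel.congr' ?_ .rfl).trans (isBigO_of_le _ fun r => ?_)
  · filter_upwards [nhdsWithin_le_nhds (lt_mem_nhds one_pos)] with r hr
    have hz : ∀ i, (r : ℂ) * τ i ≠ 0 := fun i =>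
      norm_ne_zero_iff.mp ((norm_ofReal_mul_of_norm_eq_one (hτ i) hr.le).trans_ne hr.ne')
    rw [hpt _ hz, norm_eval_radial hQ, norm_reflection_radial hτ hQ k hr, mul_pow, mul_pow, mul_sub]
  · simp [abs_sub_comm, pow_succ]

end Radial

theorem torus_zero_obstruction_general (d : ℕ) (p : MvPolynomial (Fin d) ℂ)
    (k : Fin d → ℕ)
    (ptilde : (Fin d → ℂ) → ℂ)
    (hpt : ∀ z : Fin d → ℂ, (∀ i, z i ≠ 0) →
      ptilde z = (∏ i, z i ^ (k i)) *
        (starRingEnd ℂ) (MvPolynomial.eval (fun i => ((starRingEnd ℂ) (z i))⁻¹) p))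
    (τ : Fin d → ℂ) (hτ : ∀ i, ‖τ i‖ = 1)
    (hzero : MvPolynomial.eval τ p = 0) :
    (fun r : ℝ =>
        ‖MvPolynomial.eval (fun i => (r : ℂ) * τ i) p‖ ^ d -
        ‖ptilde (fun i => (r : ℂ) * τ i)‖ ^ d)
      =O[nhdsWithin 1 (Set.Iio (1 : ℝ))] (fun r : ℝ => (1 - r) ^ (d + 1)) ∧
    ¬ ∃ c : ℝ, 0 < c ∧ ∀ z : Fin d → ℂ, (∀ i, ‖z i‖ < 1) →
      c * ∏ i, (1 - ‖z i‖ ^ 2) ≤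
        ‖MvPolynomial.eval z p‖ ^ d - ‖ptilde z‖ ^ d := by
  have hO := isBigO_norm_pow_sub_norm_reflection_pow_radial hpt hτ hzero d
  refine ⟨hO, fun ⟨c, hc, hbound⟩ => ?_⟩
  have hsmall : (fun r : ℝ => (1 - r) ^ (d + 1)) =o[𝓝[<] 1] (fun r : ℝ => (1 - r) ^ d) :=
    (isLittleO_pow_pow d.lt_succ_self).comp_tendsto
      (((continuous_sub_left 1).tendsto' 1 0 (sub_self 1)).mono_left nhdsWithin_le_nhds)
  refine not_eventually_mul_le_of_isLittleO (hO.trans_isLittleO hsmall) hc ?_ ?_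
  · filter_upwards [self_mem_nhdsWithin] with r (hr : r < 1) using pow_pos (sub_pos.mpr hr) d
  · filter_upwards [self_mem_nhdsWithin, nhdsWithin_le_nhds (lt_mem_nhds one_pos)]
      with r (hr1 : r < 1) hr0
    have hnorm i := norm_ofReal_mul_of_norm_eq_one (hτ i) hr0.le
    calc c * (1 - r) ^ d ≤ c * ∏ i : Fin d, (1 - ‖(r : ℂ) * τ i‖ ^ 2) := by
          simp only [hnorm, Finset.prod_const, Finset.card_univ, Fintype.card_fin]
          gcongr
          nlinarith
      _ ≤ _ := hbound _ fun i => (hnorm i).trans_lt hr1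

/-- If a non-constant polynomial has a zero on the torus, then along the radial
path the quantity `|p|^d - |p̃|^d` is `O((1-r)^(d+1))`, and consequently no
lower bound `c·∏(1-|zᵢ|²)` with `c > 0` can hold on the polydisk. -/
theorem torus_zero_obstruction (d : ℕ) (p : MvPolynomial (Fin d) ℂ)
    (hp : 0 < p.totalDegree)
    (k : Fin d → ℕ) (hdeg : ∀ i, p.degreeOf i = k i)
    (ptilde : (Fin d → ℂ) → ℂ)
    (hpt : ∀ z : Fin d → ℂ, (∀ i, z i ≠ 0) →
      ptilde z = (∏ i, z i ^ (k i)) *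
        (starRingEnd ℂ) (MvPolynomial.eval (fun i => ((starRingEnd ℂ) (z i))⁻¹) p))
    (τ : Fin d → ℂ) (hτ : ∀ i, ‖τ i‖ = 1)
    (hzero : MvPolynomial.eval τ p = 0) :
    (fun r : ℝ =>
        ‖MvPolynomial.eval (fun i => (r : ℂ) * τ i) p‖ ^ d -
        ‖ptilde (fun i => (r : ℂ) * τ i)‖ ^ d)
      =O[nhdsWithin 1 (Set.Iio (1 : ℝ))] (fun r : ℝ => (1 - r) ^ (d + 1)) ∧
    ¬ ∃ c : ℝ, 0 < c ∧ ∀ z : Fin d → ℂ, (∀ i, ‖z i‖ < 1) →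
      c * ∏ i, (1 - ‖z i‖ ^ 2) ≤
        ‖MvPolynomial.eval z p‖ ^ d - ‖ptilde z‖ ^ d :=
  torus_zero_obstruction_general d p k ptilde hpt τ hτ hzero
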